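/- Fix N > 0. There exist constants C > 0 and a₀ > 0 such that for all a with 0 < a ≤ a₀, | ∫_ℝ q₀(z)·L(z)² dz − (∫_ℝ q₀(z)·L(z) dz)² − 2a⁴/N² | ≤ C·a⁶. In other words, the variance of the log-likelihood ratio L under q₀ equals 2a⁴/N² + O(a⁶) as a → 0⁺. -/

import Mathlib

open MeasureTheory

/-- Density of the Gaussian distribution with mean `0` and variance `N/2`. -/
noncomputable def q0 (N z : ℝ) : ℝ := (Real.sqrt (Real.pi * N))⁻¹ * Real.exp (-z ^ 2 / N)

/-- Density of the Gaussian distribution with mean `a` and variance `N/2`. -/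
noncomputable def qa (N a z : ℝ) : ℝ := (Real.sqrt (Real.pi * N))⁻¹ * Real.exp (-(z - a) ^ 2 / N)

/-- The binary mixture density `½ q_a + ½ q_{-a}`. -/
noncomputable def qmix (N a z : ℝ) : ℝ := (1 / 2) * qa N a z + (1 / 2) * qa N (-a) z

/-- The log-likelihood ratio `log (q̃(z)/q₀(z))`. -/
noncomputable def llr (N a z : ℝ) : ℝ := Real.log (qmix N a z / q0 N z)

/-!
Since `q̃ / q₀ = exp (-a² / N) · cosh (2az / N)`, the log-likelihood ratio is a constant plus
`log (cosh (c Z))` with `c = 2a / N` and `Z ~ 𝒩(0, v)`, `v = N / 2`, so its variance is that of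
`log (cosh (c Z))`. The elementary bounds `t² / 2 - t⁴ / 4 ≤ log (cosh t) ≤ t² / 2` make this
variance differ from `Var (c² Z² / 2) = c⁴ v² / 2 = 2a⁴ / N²` by at most a multiple of
`c⁶ 𝔼 Z⁶ + c⁶ 𝔼 Z⁴ 𝔼 Z² = O(a⁶)`; the Gaussian moments come from Stein's identity
`𝔼 Z^(n+2) = (n + 1) v 𝔼 Z^n`.
-/

open Real

namespace Real

lemma one_add_sq_div_two_le_cosh (t : ℝ) : 1 + t ^ 2 / 2 ≤ cosh t := by
  have h := sum_le_hasSum (Finset.range 2) (fun n _ ↦ by rw [pow_mul]; positivity)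
    (hasSum_cosh t)
  norm_num [Finset.sum_range_succ] at h
  linarith

lemma log_cosh_le_sq_div_two (t : ℝ) : log (cosh t) ≤ t ^ 2 / 2 :=
  (log_le_iff_le_exp (cosh_pos t)).2 (cosh_le_exp_half_sq t)

lemma sq_div_two_sub_le_log_cosh (t : ℝ) : t ^ 2 / 2 - t ^ 4 / 4 ≤ log (cosh t) := by
  set u := t ^ 2 / 2
  have hu : 0 ≤ u := by positivity
  have hcosh : 1 + u ≤ cosh t := one_add_sq_div_two_le_cosh t
  calc t ^ 2 / 2 - t ^ 4 / 4 = u - u ^ 2 := by ring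
    _ ≤ 1 - (1 + u)⁻¹ := by
      rw [le_sub_comm, inv_le_iff_one_le_mul₀ (by positivity)]
      nlinarith [pow_nonneg hu 3]
    _ ≤ 1 - (cosh t)⁻¹ := by gcongr
    _ ≤ log (cosh t) := one_sub_inv_le_log_of_pos (cosh_pos t)

lemma abs_log_cosh_sub_sq_div_two_le (t : ℝ) : |log (cosh t) - t ^ 2 / 2| ≤ t ^ 4 / 4 := by
  rw [abs_sub_comm, abs_le]
  constructor <;>
    linarith [log_cosh_le_sq_div_two t, sq_div_two_sub_le_log_cosh t, pow_nonneg (sq_nonneg t) 2]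

lemma abs_log_cosh_add_sq_div_two_le (t : ℝ) : |log (cosh t) + t ^ 2 / 2| ≤ t ^ 2 := by
  rw [abs_of_nonneg (by have := log_nonneg (one_le_cosh t); positivity)]
  linarith [log_cosh_le_sq_div_two t]

end Real

open ProbabilityTheory
open scoped NNReal

namespace ProbabilityTheory

variable {v : ℝ≥0}

lemma integrable_gaussianReal_iff {m : ℝ} (hv : v ≠ 0) {f : ℝ → ℝ} :
    Integrable f (gaussianReal m v) ↔ Integrable (fun x ↦ gaussianPDFReal m v x * f x) := by
  rw [gaussianReal_of_var_ne_zero m hv, integrable_withDensity_iff_integrable_smul'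
    (measurable_gaussianPDF m v) (ae_of_all _ fun _ ↦ gaussianPDF_lt_top)]
  simp

lemma integrable_pow_gaussianReal (m : ℝ) (n : ℕ) :
    Integrable (fun x ↦ x ^ n) (gaussianReal m v) := by
  refine ((memLp_id_gaussianReal (μ := m) (v := v) n).integrable_norm_pow').mono'
    (by fun_prop) (ae_of_all _ fun x ↦ ?_)
  simp

lemma hasDerivAt_gaussianPDFReal (m x : ℝ) :
    HasDerivAt (gaussianPDFReal m v) (-((x - m) / v) * gaussianPDFReal m v x) x := by
  have h : HasDerivAt (fun y : ℝ ↦ -(y - m) ^ 2 / (2 * v)) (-((x - m) / v)) x :=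
    (((hasDerivAt_id' x).sub_const m).pow 2).neg.div_const _ |>.congr_deriv (by simp; ring)
  rw [gaussianPDFReal_def]
  exact (h.exp.const_mul _).congr_deriv (by ring)

lemma integral_pow_add_two_gaussianReal (n : ℕ) :
    ∫ x, x ^ (n + 2) ∂gaussianReal 0 v = (n + 1) * v * ∫ x, x ^ n ∂gaussianReal 0 v := by
  rcases eq_or_ne v 0 with rfl | hv
  · simp
  set p := gaussianPDFReal 0 v
  have hint (k : ℕ) : Integrable (fun x ↦ p x * x ^ k) :=
    (integrable_gaussianReal_iff hv).1 (integrable_pow_gaussianReal 0 k)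
  have hderiv (x : ℝ) : HasDerivAt (fun y ↦ y ^ (n + 1) * p y)
      ((n + 1) * (p x * x ^ n) - (v : ℝ)⁻¹ * (p x * x ^ (n + 2))) x := by
    refine ((hasDerivAt_pow (n + 1) x).mul (hasDerivAt_gaussianPDFReal 0 x)).congr_deriv ?_
    simp only [add_tsub_cancel_right, sub_zero]
    push_cast
    ring
  have h := integral_eq_zero_of_hasDerivAt_of_integrable hderiv
    (((hint n).const_mul _).sub ((hint (n + 2)).const_mul _)) ((hint (n + 1)).congr
      (ae_of_all _ fun x ↦ mul_comm _ _))
  rw [integral_sub ((hint n).const_mul _) ((hint (n + 2)).const_mul _), integral_const_mul,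
    integral_const_mul] at h
  simp only [integral_gaussianReal_eq_integral_smul hv, smul_eq_mul]
  have hv' : (v : ℝ) ≠ 0 := by exact_mod_cast hv
  field_simp at h
  linarith

lemma integral_sq_gaussianReal : ∫ x, x ^ 2 ∂gaussianReal 0 v = v := by
  simpa using integral_pow_add_two_gaussianReal (v := v) 0

lemma integral_pow_four_gaussianReal : ∫ x, x ^ 4 ∂gaussianReal 0 v = 3 * v ^ 2 := by
  rw [integral_pow_add_two_gaussianReal 2, integral_sq_gaussianReal]
  norm_num
  ring

lemma integral_pow_six_gaussianReal : ∫ x, x ^ 6 ∂gaussianReal 0 v = 15 * v ^ 3 := by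
  rw [integral_pow_add_two_gaussianReal 4, integral_pow_four_gaussianReal]
  norm_num
  ring

lemma memLp_sq_gaussianReal : MemLp (fun x : ℝ ↦ x ^ 2) 2 (gaussianReal 0 v) := by
  refine (memLp_two_iff_integrable_sq (by fun_prop)).2 ?_
  simpa only [← pow_mul] using integrable_pow_gaussianReal 0 4

lemma variance_sq_gaussianReal : Var[fun x ↦ x ^ 2; gaussianReal 0 v] = 2 * v ^ 2 := by
  rw [variance_eq_sub memLp_sq_gaussianReal]
  simp only [Pi.pow_apply, ← pow_mul, integral_sq_gaussianReal]
  rw [integral_pow_four_gaussianReal]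
  ring

variable {Ω : Type*} {mΩ : MeasurableSpace Ω} {μ : Measure Ω} {X Y : Ω → ℝ}

lemma abs_variance_sub_variance_le [IsProbabilityMeasure μ] (hX : MemLp X 2 μ)
    (hY : MemLp Y 2 μ) :
    |Var[X; μ] - Var[Y; μ]| ≤
      ∫ ω, |X ω ^ 2 - Y ω ^ 2| ∂μ + (∫ ω, |X ω - Y ω| ∂μ) * ∫ ω, |X ω + Y ω| ∂μ := by
  have hX1 := hX.integrable one_le_two
  have hY1 := hY.integrable one_le_two
  have hsub : Var[X; μ] - Var[Y; μ] =
      (∫ ω, (X ω ^ 2 - Y ω ^ 2) ∂μ) - (∫ ω, (X ω - Y ω) ∂μ) * ∫ ω, (X ω + Y ω) ∂μ := by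
    rw [variance_eq_sub hX, variance_eq_sub hY, integral_sub hX.integrable_sq hY.integrable_sq,
      integral_sub hX1 hY1, integral_add hX1 hY1]
    simp only [Pi.pow_apply]
    ring
  rw [hsub]
  refine (abs_sub _ _).trans (add_le_add (abs_integral_le_integral_abs) ?_)
  rw [abs_mul]
  exact mul_le_mul abs_integral_le_integral_abs abs_integral_le_integral_abs (abs_nonneg _)
    (integral_nonneg fun _ ↦ abs_nonneg _)

lemma memLp_log_cosh_gaussianReal (c : ℝ) :
    MemLp (fun x ↦ log (cosh (c * x))) 2 (gaussianReal 0 v) := by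
  refine (memLp_sq_gaussianReal.const_mul (c ^ 2 / 2)).mono'
    (measurable_cosh.comp (measurable_const_mul c)).log.aestronglyMeasurable
    (ae_of_all _ fun x ↦ ?_)
  rw [Real.norm_of_nonneg (log_nonneg (one_le_cosh _))]
  convert log_cosh_le_sq_div_two (c * x) using 1
  ring

lemma abs_variance_log_cosh_gaussianReal_sub_le (c : ℝ) :
    |Var[fun x ↦ log (cosh (c * x)); gaussianReal 0 v] - c ^ 4 * v ^ 2 / 2| ≤
      9 / 2 * c ^ 6 * v ^ 3 := by
  set μ := gaussianReal 0 v
  set X : ℝ → ℝ := fun x ↦ log (cosh (c * x))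
  set Y : ℝ → ℝ := fun x ↦ c ^ 2 / 2 * x ^ 2
  have hY : MemLp Y 2 μ := memLp_sq_gaussianReal.const_mul _
  have hX : MemLp X 2 μ := memLp_log_cosh_gaussianReal c
  have hVarY : Var[Y; μ] = c ^ 4 * v ^ 2 / 2 := by
    rw [variance_const_mul, variance_sq_gaussianReal]
    ring
  have hdiff (x : ℝ) : |X x - Y x| ≤ c ^ 4 / 4 * x ^ 4 := by
    convert abs_log_cosh_sub_sq_div_two_le (c * x) using 3 <;> ring
  have hsum (x : ℝ) : |X x + Y x| ≤ c ^ 2 * x ^ 2 := by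
    convert abs_log_cosh_add_sq_div_two_le (c * x) using 3 <;> ring
  have hsq (x : ℝ) : |X x ^ 2 - Y x ^ 2| ≤ c ^ 6 / 4 * x ^ 6 := by
    calc |X x ^ 2 - Y x ^ 2| = |X x - Y x| * |X x + Y x| := by rw [← abs_mul]; ring_nf
      _ ≤ c ^ 4 / 4 * x ^ 4 * (c ^ 2 * x ^ 2) :=
        mul_le_mul (hdiff x) (hsum x) (abs_nonneg _) (by positivity)
      _ = c ^ 6 / 4 * x ^ 6 := by ring
  have hmono {f : ℝ → ℝ} {k : ℝ} {n : ℕ} (hf : ∀ x, |f x| ≤ k * x ^ n) :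
      ∫ x, |f x| ∂μ ≤ k * ∫ x, x ^ n ∂μ := by
    rw [← integral_const_mul]
    exact integral_mono_of_nonneg (ae_of_all _ fun x ↦ abs_nonneg _)
      ((integrable_pow_gaussianReal 0 n).const_mul k) (ae_of_all _ hf)
  calc |Var[X; μ] - c ^ 4 * v ^ 2 / 2| = |Var[X; μ] - Var[Y; μ]| := by rw [hVarY]
    _ ≤ ∫ x, |X x ^ 2 - Y x ^ 2| ∂μ + (∫ x, |X x - Y x| ∂μ) * ∫ x, |X x + Y x| ∂μ :=
      abs_variance_sub_variance_le hX hY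
    _ ≤ c ^ 6 / 4 * ∫ x, x ^ 6 ∂μ
          + (c ^ 4 / 4 * ∫ x, x ^ 4 ∂μ) * (c ^ 2 * ∫ x, x ^ 2 ∂μ) := by
      gcongr
      · exact hmono hsq
      · exact hmono hdiff
      · exact hmono hsum
    _ = 9 / 2 * c ^ 6 * v ^ 3 := by
      rw [integral_pow_six_gaussianReal, integral_pow_four_gaussianReal,
        integral_sq_gaussianReal]
      ring

end ProbabilityTheory

lemma q0_eq_gaussianPDFReal {N : ℝ} (hN : 0 < N) :
    q0 N = gaussianPDFReal 0 (N / 2).toNNReal := by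
  ext z
  rw [gaussianPDFReal_def, q0, Real.coe_toNNReal _ (by positivity)]
  ring_nf

lemma integral_q0_mul {N : ℝ} (hN : 0 < N) (f : ℝ → ℝ) :
    ∫ z, q0 N z * f z = ∫ z, f z ∂gaussianReal 0 (N / 2).toNNReal := by
  rw [integral_gaussianReal_eq_integral_smul (by simpa using hN), q0_eq_gaussianPDFReal hN]
  rfl

lemma qmix_eq_q0_mul (N a z : ℝ) :
    qmix N a z = q0 N z * (exp (-a ^ 2 / N) * cosh (2 * a / N * z)) := by
  have hshift (b : ℝ) :
      exp (-(z - b) ^ 2 / N) = exp (-z ^ 2 / N) * (exp (-b ^ 2 / N) * exp (2 * b / N * z)) := by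
    rw [← exp_add, ← exp_add]
    ring_nf
  simp only [q0, qmix, qa, hshift, neg_sq, cosh_eq]
  ring_nf

lemma llr_eq_log_cosh {N : ℝ} (hN : 0 < N) (a : ℝ) :
    llr N a = fun z ↦ -a ^ 2 / N + log (cosh (2 * a / N * z)) := by
  ext z
  have hq0 : q0 N z ≠ 0 := by
    rw [q0_eq_gaussianPDFReal hN]
    exact (gaussianPDFReal_pos _ _ _ (by simpa using hN)).ne'
  rw [_root_.llr, qmix_eq_q0_mul, mul_div_cancel_left₀ _ hq0,
    log_mul (exp_ne_zero _) (cosh_pos _).ne', log_exp]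

lemma integral_q0_mul_llr_sq_sub_sq_eq_variance {N : ℝ} (hN : 0 < N) (a : ℝ) :
    (∫ z, q0 N z * llr N a z ^ 2) - (∫ z, q0 N z * llr N a z) ^ 2 =
      Var[fun z ↦ log (cosh (2 * a / N * z)); gaussianReal 0 (N / 2).toNNReal] := by
  have hlogcosh := memLp_log_cosh_gaussianReal (v := (N / 2).toNNReal) (2 * a / N)
  have hllr : MemLp (_root_.llr N a) 2 (gaussianReal 0 (N / 2).toNNReal) := by
    rw [llr_eq_log_cosh hN]
    exact (memLp_const (-a ^ 2 / N)).add hlogcosh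
  have hvar := variance_const_add hlogcosh.1 (-a ^ 2 / N)
  rw [← llr_eq_log_cosh hN, variance_eq_sub hllr] at hvar
  simp only [integral_q0_mul hN]
  simpa only [Pi.pow_apply] using hvar

/-- The variance of the log-likelihood ratio `L` under `q₀` equals `2a⁴/N² + O(a⁶)`. -/
theorem var_llr_q0 (N : ℝ) (hN : 0 < N) :
    ∃ C > (0 : ℝ), ∃ a₀ > (0 : ℝ), ∀ a : ℝ, 0 < a → a ≤ a₀ →
      |(∫ z : ℝ, q0 N z * (llr N a z) ^ 2) - (∫ z : ℝ, q0 N z * llr N a z) ^ 2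
        - 2 * a ^ 4 / N ^ 2| ≤ C * a ^ 6 := by
  refine ⟨36 / N ^ 3, by positivity, 1, one_pos, fun a _ _ ↦ ?_⟩
  have h := abs_variance_log_cosh_gaussianReal_sub_le (v := (N / 2).toNNReal) (2 * a / N)
  rw [Real.coe_toNNReal _ (by positivity)] at h
  rw [integral_q0_mul_llr_sq_sub_sq_eq_variance hN]
  calc _ = |Var[fun x ↦ log (cosh (2 * a / N * x)); gaussianReal 0 (N / 2).toNNReal]
        - (2 * a / N) ^ 4 * (N / 2) ^ 2 / 2| := by congr 2; field_simp
    _ ≤ 9 / 2 * (2 * a / N) ^ 6 * (N / 2) ^ 3 := h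
    _ = 36 / N ^ 3 * a ^ 6 := by field_simp; ring
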